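/- Suppose (1/N)·∑_{n=1}^N x[n] → u ∈ ℝ^m as N → ∞, and for each output coordinate j, writing c_j := (W·u)_j, assume: (a) if c_j < 0 then s[n]_j = 1 for only finitely many n; (b) if c_j > V_th then s[n]_j = 0 for only finitely many n; (c) if 0 ≤ c_j ≤ V_th then V[N]_j/N → 0. Then for every coordinate j, the scaled firing rate converges: a[N]_j → clamp(c_j, 0, V_th), where clamp(x,a,b) := max(a, min(x,b)). -/

import Mathlib

/-!
For `n ≥ 1` the spikes take values in `{0, 1}`. In cases (a) and (b) the spike train is therefore
eventually constant, equal to `0` resp. `1`, and so is its Cesàro mean. In case (c) the reset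
equation telescopes to `V[N] = ∑ₙ (W x[n]) - V_th ∑ₙ s[n]`, so the scaled rate equals the average
input current minus `V[N] / N`, which tends to `(W u)_j`.
-/

open Filter Finset Topology

theorem Finset.sum_Icc_one_eq_sum_range_succ {M : Type*} [AddCommMonoid M] (f : ℕ → M) (N : ℕ) :
    ∑ n ∈ Icc 1 N, f n = ∑ i ∈ range N, f (i + 1) := by
  induction N with
  | zero => simp
  | succ N ih => rw [sum_Icc_succ_top (by omega), sum_range_succ, ih]

theorem Filter.Tendsto.cesaro_Icc {f : ℕ → ℝ} {l : ℝ} (h : Tendsto f atTop (𝓝 l)) :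
    Tendsto (fun N : ℕ => (1 / (N : ℝ)) * ∑ n ∈ Icc 1 N, f n) atTop (𝓝 l) := by
  simpa only [one_div, sum_Icc_one_eq_sum_range_succ] using
    ((tendsto_add_atTop_iff_nat 1).2 h).cesaro

theorem Matrix.tendsto_average_mulVec_apply {ι κ : Type*} [Fintype κ] (W : Matrix ι κ ℝ)
    {x : ℕ → κ → ℝ} {u : κ → ℝ}
    (hx : ∀ k, Tendsto (fun N : ℕ => (1 / (N : ℝ)) * ∑ n ∈ Icc 1 N, x n k) atTop (𝓝 (u k)))
    (j : ι) :
    Tendsto (fun N : ℕ => (1 / (N : ℝ)) * ∑ n ∈ Icc 1 N, W.mulVec (x n) j) atTop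
      (𝓝 (W.mulVec u j)) := by
  have hcont : Continuous fun v : κ → ℝ => W.mulVec v j :=
    (continuous_apply j).comp (continuous_const.matrix_mulVec continuous_id)
  convert (hcont.tendsto u).comp (tendsto_pi_nhds.2 hx) using 2 with N
  have hmean : (fun k => 1 / (N : ℝ) * ∑ n ∈ Icc 1 N, x n k)
      = (1 / (N : ℝ)) • ∑ n ∈ Icc 1 N, x n := by
    ext k
    simp [Finset.sum_apply]
  simp only [Function.comp_apply, hmean, Matrix.mulVec_smul, Matrix.mulVec_sum, Pi.smul_apply,
    Finset.sum_apply, smul_eq_mul]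

theorem tendsto_of_finite_setOf_eq {s : ℕ → ℝ} {a b : ℝ} (hab : ∀ n, 1 ≤ n → s n = a ∨ s n = b)
    (hfin : {n : ℕ | 1 ≤ n ∧ s n = a}.Finite) : Tendsto s atTop (𝓝 b) := by
  have hout : ∀ᶠ n in atTop, n ∉ {n : ℕ | 1 ≤ n ∧ s n = a} :=
    Nat.cofinite_eq_atTop ▸ hfin.eventually_cofinite_notMem
  refine tendsto_const_nhds.congr' ?_
  filter_upwards [hout, eventually_ge_atTop 1] with n hn h1
  exact ((hab n h1).resolve_left fun h => hn ⟨h1, h⟩).symm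

theorem tendsto_const_div_mul_sum_Icc {s : ℕ → ℝ} {b : ℝ} (c : ℝ) (h : Tendsto s atTop (𝓝 b)) :
    Tendsto (fun N : ℕ => c / N * ∑ n ∈ Icc 1 N, s n) atTop (𝓝 (c * b)) :=
  (h.cesaro_Icc.const_mul c).congr fun N => by ring

namespace IFNeuron

variable {Vth : ℝ} {y V s : ℕ → ℝ}

theorem spike_eq_zero_or_one (hs : ∀ n, s (n + 1) = if Vth ≤ V n + y (n + 1) then 1 else 0) :
    ∀ n, 1 ≤ n → s n = 0 ∨ s n = 1 := by
  intro n hn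
  obtain ⟨k, rfl⟩ := Nat.exists_eq_add_of_le' hn
  rw [hs]
  split_ifs <;> simp

theorem membrane_eq_sum_sub (hV0 : V 0 = 0)
    (hV : ∀ n, V (n + 1) = V n + y (n + 1) - Vth * s (n + 1)) (N : ℕ) :
    V N = ∑ n ∈ Icc 1 N, y n - Vth * ∑ n ∈ Icc 1 N, s n := by
  induction N with
  | zero => simp [hV0]
  | succ N ih =>
    rw [hV, ih, sum_Icc_succ_top (by omega), sum_Icc_succ_top (by omega)]
    ring

theorem tendsto_rate_of_membrane_div {c : ℝ} (hV0 : V 0 = 0)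
    (hV : ∀ n, V (n + 1) = V n + y (n + 1) - Vth * s (n + 1))
    (hy : Tendsto (fun N : ℕ => (1 / (N : ℝ)) * ∑ n ∈ Icc 1 N, y n) atTop (𝓝 c))
    (hVN : Tendsto (fun N : ℕ => V N / N) atTop (𝓝 0)) :
    Tendsto (fun N : ℕ => Vth / N * ∑ n ∈ Icc 1 N, s n) atTop (𝓝 c) := by
  refine (sub_zero c ▸ hy.sub hVN).congr fun N => ?_
  rw [membrane_eq_sum_sub hV0 hV]
  ring

end IFNeuron

/-- One layer of `d` IF neurons with weight matrix `W : ℝ^{d×m}` and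
threshold `Vth > 0`, driven by inputs `x : ℕ → ℝ^m`. If the time-averaged inputs
converge to `u`, and for each output coordinate `j` (writing `c_j = (W·u)_j`):
(a) if `c_j < 0` then `s n j = 1` for only finitely many `n`;
(b) if `c_j > Vth` then `s n j = 0` for only finitely many `n`;
(c) if `0 ≤ c_j ≤ Vth` then `V N j / N → 0`;
then for every coordinate `j` the scaled firing rate converges to
`clamp(c_j, 0, Vth) = max 0 (min c_j Vth)`. -/
theorem if_layer_rate_tendsto_clamp (d m : ℕ) (W : Matrix (Fin d) (Fin m) ℝ)
    (Vth : ℝ) (hVth : 0 < Vth)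
    (x : ℕ → Fin m → ℝ) (V s : ℕ → Fin d → ℝ)
    (hV0 : ∀ j, V 0 j = 0)
    (hs : ∀ n : ℕ, ∀ j, s (n + 1) j
            = if Vth ≤ V n j + W.mulVec (x (n + 1)) j then 1 else 0)
    (hV : ∀ n : ℕ, ∀ j, V (n + 1) j
            = (V n j + W.mulVec (x (n + 1)) j) - Vth * s (n + 1) j)
    (u : Fin m → ℝ)
    (hx : ∀ k, Tendsto (fun N : ℕ => (1 / (N : ℝ)) * ∑ n ∈ Finset.Icc 1 N, x n k)
            atTop (nhds (u k)))
    (ha : ∀ j, W.mulVec u j < 0 → {n : ℕ | 1 ≤ n ∧ s n j = 1}.Finite)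
    (hb : ∀ j, Vth < W.mulVec u j → {n : ℕ | 1 ≤ n ∧ s n j = 0}.Finite)
    (hc : ∀ j, 0 ≤ W.mulVec u j → W.mulVec u j ≤ Vth →
            Tendsto (fun N : ℕ => V N j / N) atTop (nhds 0)) :
    ∀ j, Tendsto (fun N : ℕ => (Vth / N) * ∑ n ∈ Finset.Icc 1 N, s n j)
          atTop (nhds (max 0 (min (W.mulVec u j) Vth))) := by
  intro j
  have h01 := IFNeuron.spike_eq_zero_or_one (y := fun n => W.mulVec (x n) j) (V := (V · j))
    (s := (s · j)) (hs · j)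
  rcases lt_or_ge (W.mulVec u j) 0 with hneg | hnonneg
  · rw [max_eq_left (min_le_of_left_le hneg.le)]
    have hsilent := tendsto_of_finite_setOf_eq (fun n hn => (h01 n hn).symm) (ha j hneg)
    simpa only [mul_zero] using tendsto_const_div_mul_sum_Icc Vth hsilent
  rcases le_or_gt (W.mulVec u j) Vth with hle | hgt
  · rw [min_eq_left hle, max_eq_right hnonneg]
    exact IFNeuron.tendsto_rate_of_membrane_div (hV0 j) (hV · j)
      (W.tendsto_average_mulVec_apply hx j) (hc j hnonneg hle)
  · rw [min_eq_right hgt.le, max_eq_right hVth.le]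
    have hsaturated := tendsto_of_finite_setOf_eq h01 (hb j hgt)
    simpa only [mul_one] using tendsto_const_div_mul_sum_Icc Vth hsaturated
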